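/- arXiv:1001.3351 — 3 statements merged into one kernel-verified Lean document; each statement's English description precedes it below -/
import Mathlib

section
/- Let n ≥ 2 and let c₁, c₂ ∈ ℝ with c₁·c₂ ≠ 0. Consider the two curve-germs in ℝ^{2n} (coordinates (p₁,q₁,p₂,q₂,…,pₙ,qₙ), all unlisted coordinates equal to 0): B₁(t) = (t³, −c₁t², 0, −t², 0, …, 0) and B₂(t) = (t³, −c₂t², −t², 0, 0, …, 0) (the class (T₇)⁰). Then Lt(B₁,B₂) = 2, Lt(B₁) = 3 and Lt(B₂) = 3. -/
noncomputable section

/-- The order of vanishing at `0` of a function `h : ℝ → ℝ`: the least `k ≥ 1` such that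
the `k`-th derivative of `h` at `0` is nonzero, and `∞` if all derivatives vanish at `0`. -/
def vanishOrder (h : ℝ → ℝ) : ℕ∞ :=
  sInf {k : ℕ∞ | ∃ m : ℕ, k = m ∧ 1 ≤ m ∧ iteratedDeriv m h 0 ≠ 0}

/-- The standard symplectic form `ω = ∑ dpᵢ ∧ dqᵢ` on `ℝ^{2n}`, where the coordinates are
ordered as `(p₁, q₁, …, pₙ, qₙ)` (so `pᵢ` has index `2(i-1)` and `qᵢ` has index `2(i-1)+1`). -/
def stdSymp (n : ℕ) (u v : Fin (2 * n) → ℝ) : ℝ :=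
  ∑ i : Fin n,
    (u ⟨2 * i.val, by have := i.isLt; omega⟩ * v ⟨2 * i.val + 1, by have := i.isLt; omega⟩ -
     u ⟨2 * i.val + 1, by have := i.isLt; omega⟩ * v ⟨2 * i.val, by have := i.isLt; omega⟩)

/-- A germ at `0` of a smooth Lagrangian submanifold of `(ℝ^{2n}, ω)`, given by `n` smooth
functions `H₁, …, Hₙ` vanishing at `0`, whose differentials are linearly independent at the
points of `{H₁ = ⋯ = Hₙ = 0}` near `0`, and such that `ω` vanishes on `ker DH(x)` at every
such point. -/
structure LagrangianGerm (n : ℕ) : Type where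
  H : Fin n → (Fin (2 * n) → ℝ) → ℝ
  smooth : ∀ i, ContDiff ℝ (⊤ : ℕ∞) (H i)
  zero_at_zero : ∀ i, H i 0 = 0
  lagrangian : ∃ U : Set (Fin (2 * n) → ℝ), IsOpen U ∧ 0 ∈ U ∧
    ∀ x ∈ U, (∀ i, H i x = 0) →
      LinearIndependent ℝ (fun i => fderiv ℝ (H i) x) ∧
      ∀ u v : Fin (2 * n) → ℝ, (∀ i, fderiv ℝ (H i) x u = 0) →
        (∀ i, fderiv ℝ (H i) x v = 0) → stdSymp n u v = 0

/-- The tangency order `t(f, L)` of a curve `f` to a Lagrangian submanifold-germ `L`: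
the minimum over `i` of the order of vanishing at `0` of `Hᵢ ∘ f`. -/
def tOrd {n : ℕ} (f : ℝ → Fin (2 * n) → ℝ) (L : LagrangianGerm n) : ℕ∞ :=
  ⨅ i : Fin n, vanishOrder (fun t => L.H i (f t))

/-- The Lagrangian tangency order `Lt(f)` of a curve `f`. -/
def Lt1 {n : ℕ} (f : ℝ → Fin (2 * n) → ℝ) : ℕ∞ :=
  ⨆ L : LagrangianGerm n, tOrd f L

/-- The Lagrangian tangency order `Lt(f, g)` of a multi-germ of two curves. -/
def Lt2 {n : ℕ} (f g : ℝ → Fin (2 * n) → ℝ) : ℕ∞ :=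
  ⨆ L : LagrangianGerm n, min (tOrd f L) (tOrd g L)

/-- The Lagrangian tangency order `Lt(f, g, h)` of a multi-germ of three curves. -/
def Lt3 {n : ℕ} (f g h : ℝ → Fin (2 * n) → ℝ) : ℕ∞ :=
  ⨆ L : LagrangianGerm n, min (tOrd f L) (min (tOrd g L) (tOrd h L))

/-!
Both curves are cusps `γ(t) = t² v + t³ w`. For a smooth `H` with `H 0 = 0`, strict
differentiability at `0` gives `H(γ(t)) = t² DH(0) v + o(t²)`, and comparing `γ(t)` with `γ(-t)`
gives `H(γ(t)) - H(γ(-t)) = 2 t³ DH(0) w + o(t³)`. So a Lagrangian `L = {H = 0}` tangent to `γ` to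
order `> 3` has `v, w ∈ T₀L`, and one tangent to two cusps to order `> 2` contains both quadratic
coefficients. As `T₀L` is isotropic while `ω(v₁, w) = c₁`, `ω(v₂, w) = c₂` and `ω(v₁, v₂) = -1`,
the orders are at most `3`, `3` and `2`; coordinate Lagrangian planes attain them.
-/

open Filter Asymptotics Topology

theorem iteratedDeriv_eq_zero_of_lt_vanishOrder {h : ℝ → ℝ} {k : ℕ} (hk : 1 ≤ k)
    (hlt : (k : ℕ∞) < vanishOrder h) : iteratedDeriv k h 0 = 0 := by
  by_contra hne
  exact (sInf_le ⟨k, rfl, hk, hne⟩ : vanishOrder h ≤ k).not_gt hlt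

theorem le_vanishOrder {h : ℝ → ℝ} {m : ℕ∞}
    (hz : ∀ k : ℕ, 1 ≤ k → (k : ℕ∞) < m → iteratedDeriv k h 0 = 0) : m ≤ vanishOrder h := by
  refine le_sInf ?_
  rintro _ ⟨k, rfl, hk, hne⟩
  by_contra hlt
  exact hne (hz k hk (not_le.1 hlt))

theorem isLittleO_pow_of_lt_vanishOrder {h : ℝ → ℝ} {m : ℕ} (hh : ContDiff ℝ m h) (h0 : h 0 = 0)
    (hlt : (m : ℕ∞) < vanishOrder h) : h =o[𝓝 0] (· ^ m) := by
  have hz : ∀ k ≤ m, iteratedDeriv k h 0 = 0 := fun k hk => by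
    rcases k.eq_zero_or_pos with rfl | hk0
    · simpa using h0
    · exact iteratedDeriv_eq_zero_of_lt_vanishOrder hk0 ((Nat.cast_le.2 hk).trans_lt hlt)
  have htaylor : ∀ t, taylorWithinEval h m Set.univ 0 t = 0 := fun t => by
    rw [taylor_within_apply]
    refine Finset.sum_eq_zero fun k hk => ?_
    rw [iteratedDerivWithin_univ, hz k (Finset.mem_range_succ_iff.1 hk), smul_zero]
  simpa [htaylor] using taylor_isLittleO_univ (x₀ := 0) hh

theorem eq_zero_of_pow_mul_isLittleO {k : ℕ} {c : ℝ}
    (h : (fun t : ℝ => t ^ k * c) =o[𝓝 0] (· ^ k)) : c = 0 := by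
  have hc : Tendsto (fun _ : ℝ => c) (𝓝[≠] 0) (𝓝 0) := by
    refine (h.tendsto_div_nhds_zero.mono_left nhdsWithin_le_nhds).congr' ?_
    filter_upwards [self_mem_nhdsWithin] with t ht
    field_simp [pow_ne_zero k ht]
  exact tendsto_nhds_unique tendsto_const_nhds hc

theorem HasStrictFDerivAt.map_eq_zero_of_isLittleO {E : Type*} [NormedAddCommGroup E]
    [NormedSpace ℝ E] {H : E → ℝ} {L : E →L[ℝ] ℝ} {a : E} (hH : HasStrictFDerivAt H L a)
    {x y : ℝ → E} (hx : Tendsto x (𝓝 0) (𝓝 a)) (hy : Tendsto y (𝓝 0) (𝓝 a)) {k : ℕ} {u : E}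
    (hxy : (fun t => x t - y t - t ^ k • u) =o[𝓝 0] (· ^ k))
    (hHx : (fun t => H (x t)) =o[𝓝 0] (· ^ k)) (hHy : (fun t => H (y t)) =o[𝓝 0] (· ^ k)) :
    L u = 0 := by
  have hdiff : (fun t => x t - y t) =O[𝓝 0] (· ^ k) := by
    have hu : (fun t : ℝ => t ^ k • u) =O[𝓝 0] (· ^ k) :=
      isBigO_of_le' (c := ‖u‖) _ fun t => by rw [norm_smul, mul_comm]
    simpa using hxy.isBigO.add hu
  have hrem : (fun t => H (x t) - H (y t) - L (x t - y t)) =o[𝓝 0] (· ^ k) :=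
    ((hasStrictFDerivAt_iff_isLittleO.1 hH).comp_tendsto (hx.prodMk_nhds hy)).trans_isBigO hdiff
  have hlin : (fun t => L (x t - y t - t ^ k • u)) =o[𝓝 0] (· ^ k) :=
    (L.isBigO_comp _ _).trans_isLittleO hxy
  refine eq_zero_of_pow_mul_isLittleO (((hHx.sub hHy).sub hrem).sub hlin |>.congr_left ?_)
  intro t
  simp only [map_sub, map_smul, smul_eq_mul]
  ring

section Cusp

variable {E : Type*} [NormedAddCommGroup E] [NormedSpace ℝ E] {H : E → ℝ} {v w : E}

def cusp (v w : E) (t : ℝ) : E := t ^ 2 • v + t ^ 3 • w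

theorem contDiff_cusp (v w : E) {m : WithTop ℕ∞} : ContDiff ℝ m (cusp v w) :=
  ((contDiff_id.pow 2).smul contDiff_const).add ((contDiff_id.pow 3).smul contDiff_const)

theorem tendsto_cusp (v w : E) : Tendsto (cusp v w) (𝓝 0) (𝓝 0) := by
  simpa [cusp] using (contDiff_cusp v w (m := 0)).continuous.tendsto 0

theorem HasStrictFDerivAt.map_eq_zero_of_comp_cusp_isLittleO_sq {L : E →L[ℝ] ℝ}
    (hH : HasStrictFDerivAt H L 0) (h0 : H 0 = 0)
    (ho : (fun t => H (cusp v w t)) =o[𝓝 0] (· ^ 2)) : L v = 0 := by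
  refine hH.map_eq_zero_of_isLittleO (tendsto_cusp v w) tendsto_const_nhds ?_ ho
    (by simp [h0])
  have hw : (fun t : ℝ => t ^ 3 • w) =o[𝓝 0] (· ^ 2) :=
    ((isLittleO_pow_pow (by norm_num : 2 < 3)).smul_isBigO
      (isBigO_const_const w one_ne_zero _)).congr_right (by simp)
  simpa [cusp] using hw

theorem HasStrictFDerivAt.map_eq_zero_of_comp_cusp_isLittleO_cube {L : E →L[ℝ] ℝ}
    (hH : HasStrictFDerivAt H L 0)
    (ho : (fun t => H (cusp v w t)) =o[𝓝 0] (· ^ 3)) : L w = 0 := by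
  have hneg₀ : Tendsto (fun t : ℝ => -t) (𝓝 0) (𝓝 0) := by simpa using tendsto_neg (0 : ℝ)
  have hneg : (fun t => H (cusp v w (-t))) =o[𝓝 0] (· ^ 3) := by
    have h := (ho.comp_tendsto hneg₀).neg_right
    refine h.congr (fun _ => rfl) fun t => ?_
    simp [Odd.neg_pow (by decide : Odd 3)]
  have h2w : L ((2 : ℝ) • w) = 0 := by
    refine hH.map_eq_zero_of_isLittleO (tendsto_cusp v w)
      ((tendsto_cusp v w).comp hneg₀) ?_ ho hneg
    refine (isLittleO_zero _ _).congr_left fun t => ?_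
    simp only [Function.comp, cusp]
    rw [Even.neg_pow (by decide), Odd.neg_pow (by decide)]
    module
  simpa using h2w

theorem fderiv_apply_eq_zero_of_two_lt_vanishOrder_comp_cusp (hH : ContDiff ℝ 2 H) (h0 : H 0 = 0)
    (hlt : 2 < vanishOrder fun t => H (cusp v w t)) : fderiv ℝ H 0 v = 0 :=
  (hH.hasStrictFDerivAt two_ne_zero).map_eq_zero_of_comp_cusp_isLittleO_sq h0 <|
    isLittleO_pow_of_lt_vanishOrder (hH.comp (contDiff_cusp v w)) (by simp [cusp, h0])
      (by exact_mod_cast hlt)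

theorem fderiv_apply_eq_zero_of_three_lt_vanishOrder_comp_cusp (hH : ContDiff ℝ 3 H) (h0 : H 0 = 0)
    (hlt : 3 < vanishOrder fun t => H (cusp v w t)) : fderiv ℝ H 0 w = 0 :=
  (hH.hasStrictFDerivAt three_ne_zero).map_eq_zero_of_comp_cusp_isLittleO_cube <|
    isLittleO_pow_of_lt_vanishOrder (hH.comp (contDiff_cusp v w)) (by simp [cusp, h0])
      (by exact_mod_cast hlt)

end Cusp

namespace LagrangianGerm

variable {n : ℕ} (L : LagrangianGerm n)

theorem contDiff_H (i : Fin n) (m : ℕ) : ContDiff ℝ m (L.H i) :=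
  (L.smooth i).of_le (by exact_mod_cast le_top)

theorem stdSymp_eq_zero {u v : Fin (2 * n) → ℝ} (hu : ∀ i, fderiv ℝ (L.H i) 0 u = 0)
    (hv : ∀ i, fderiv ℝ (L.H i) 0 v = 0) : stdSymp n u v = 0 := by
  obtain ⟨U, -, h0U, hL⟩ := L.lagrangian
  exact (hL 0 h0U L.zero_at_zero).2 u v hu hv

theorem tOrd_cusp_le_three {v w : Fin (2 * n) → ℝ} (hω : stdSymp n v w ≠ 0) :
    tOrd (cusp v w) L ≤ 3 := by
  by_contra! hlt
  have hi (i : Fin n) : 3 < vanishOrder fun t => L.H i (cusp v w t) :=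
    hlt.trans_le (iInf_le _ i)
  refine hω (L.stdSymp_eq_zero (fun i => ?_) fun i => ?_)
  · exact fderiv_apply_eq_zero_of_two_lt_vanishOrder_comp_cusp (L.contDiff_H i 2)
      (L.zero_at_zero i) ((by norm_num : (2 : ℕ∞) < 3).trans (hi i))
  · exact fderiv_apply_eq_zero_of_three_lt_vanishOrder_comp_cusp (L.contDiff_H i 3)
      (L.zero_at_zero i) (hi i)

theorem min_tOrd_cusp_le_two {v w v' w' : Fin (2 * n) → ℝ} (hω : stdSymp n v v' ≠ 0) :
    min (tOrd (cusp v w) L) (tOrd (cusp v' w') L) ≤ 2 := by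
  by_contra! hlt
  rw [lt_min_iff] at hlt
  refine hω (L.stdSymp_eq_zero (fun i => ?_) fun i => ?_)
  · exact fderiv_apply_eq_zero_of_two_lt_vanishOrder_comp_cusp (L.contDiff_H i 2)
      (L.zero_at_zero i) (hlt.1.trans_le (iInf_le _ i))
  · exact fderiv_apply_eq_zero_of_two_lt_vanishOrder_comp_cusp (L.contDiff_H i 2)
      (L.zero_at_zero i) (hlt.2.trans_le (iInf_le _ i))

end LagrangianGerm

theorem linearIndependent_proj {ι : Type*} [Fintype ι] :
    LinearIndependent ℝ fun j : ι => (ContinuousLinearMap.proj j : (ι → ℝ) →L[ℝ] ℝ) := by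
  classical
  refine Fintype.linearIndependent_iff.2 fun g hg j => ?_
  simpa [Pi.single_apply] using congr($hg (Pi.single j 1))

theorem iteratedDeriv_pow_mul_add_pow_mul_zero (j k l : ℕ) (a b : ℝ) :
    iteratedDeriv j (fun t : ℝ => t ^ k * a + t ^ l * b) 0 =
      (if j = k then k.factorial * a else 0) + (if j = l then l.factorial * b else 0) := by
  rw [iteratedDeriv_fun_add (by fun_prop) (by fun_prop)]
  simp only [iteratedDeriv_mul_const_field, iteratedDeriv_fun_pow_zero, Nat.cast_ite,
    Nat.cast_zero, ite_mul, zero_mul]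

/-- The index of `qᵢ` if `b i`, and of `pᵢ` otherwise. -/
def lagCoord {n : ℕ} (b : Fin n → Bool) (i : Fin n) : Fin (2 * n) :=
  ⟨2 * i + if b i then 1 else 0, by have := i.isLt; split <;> omega⟩

theorem lagCoord_injective {n : ℕ} (b : Fin n → Bool) : Function.Injective (lagCoord b) := by
  intro i j h
  have h' := congrArg Fin.val h
  simp only [lagCoord] at h'
  ext
  split at h' <;> split at h' <;> omega

theorem stdSymp_eq_zero_of_apply_lagCoord_eq_zero {n : ℕ} (b : Fin n → Bool)
    {u v : Fin (2 * n) → ℝ} (hu : ∀ i, u (lagCoord b i) = 0) (hv : ∀ i, v (lagCoord b i) = 0) :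
    stdSymp n u v = 0 := by
  refine Finset.sum_eq_zero fun i _ => ?_
  have hu := hu i
  have hv := hv i
  cases hb : b i <;>
    simp only [lagCoord, hb, Bool.false_eq_true, if_true, if_false, add_zero] at hu hv <;>
    simp [hu, hv]

def LagrangianGerm.coordPlane {n : ℕ} (b : Fin n → Bool) : LagrangianGerm n where
  H i := ContinuousLinearMap.proj (R := ℝ) (φ := fun _ : Fin (2 * n) => ℝ) (lagCoord b i)
  smooth _ := ContinuousLinearMap.contDiff _
  zero_at_zero _ := rfl
  lagrangian := by
    refine ⟨Set.univ, isOpen_univ, trivial, fun x _ _ => ⟨?_, fun u v hu hv => ?_⟩⟩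
    · simpa only [ContinuousLinearMap.fderiv, Function.comp_def] using
        linearIndependent_proj.comp _ (lagCoord_injective b)
    · simp only [ContinuousLinearMap.fderiv] at hu hv
      exact stdSymp_eq_zero_of_apply_lagCoord_eq_zero b hu hv

section CoordPlane

open LagrangianGerm

variable {n : ℕ} {b : Fin n → Bool} {v w : Fin (2 * n) → ℝ}

theorem coordPlane_H_cusp (i : Fin n) (t : ℝ) :
    (coordPlane b).H i (cusp v w t) = t ^ 2 * v (lagCoord b i) + t ^ 3 * w (lagCoord b i) := by
  simp [coordPlane, cusp]

theorem two_le_tOrd_cusp_coordPlane : 2 ≤ tOrd (cusp v w) (coordPlane b) := by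
  refine le_iInf fun i => le_vanishOrder fun j hj hj2 => ?_
  obtain rfl : j = 1 := by norm_cast at hj2; omega
  simp only [coordPlane_H_cusp, iteratedDeriv_pow_mul_add_pow_mul_zero]
  norm_num

theorem three_le_tOrd_cusp_coordPlane (hv : ∀ i, v (lagCoord b i) = 0) :
    3 ≤ tOrd (cusp v w) (coordPlane b) := by
  refine le_iInf fun i => le_vanishOrder fun j hj hj3 => ?_
  have hj' : j = 1 ∨ j = 2 := by norm_cast at hj3; omega
  rcases hj' with rfl | rfl <;>
    simp only [coordPlane_H_cusp, iteratedDeriv_pow_mul_add_pow_mul_zero, hv] <;> norm_num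

end CoordPlane

def cubicPart (n : ℕ) : Fin (2 * n) → ℝ := fun j => if (j : ℕ) = 0 then 1 else 0

def quadraticPart (n : ℕ) (c : ℝ) (k : ℕ) : Fin (2 * n) → ℝ :=
  fun j => if (j : ℕ) = 1 then -c else if (j : ℕ) = k then -1 else 0

theorem eq_cusp_quadraticPart_cubicPart {n k : ℕ} (hk : k ≠ 0) (c : ℝ) :
    (fun (t : ℝ) (j : Fin (2 * n)) => if (j : ℕ) = 0 then t ^ 3 else if (j : ℕ) = 1
      then -c * t ^ 2 else if (j : ℕ) = k then -t ^ 2 else (0 : ℝ)) =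
    cusp (quadraticPart n c k) (cubicPart n) := by
  funext t j
  simp only [cusp, Pi.add_apply, Pi.smul_apply, quadraticPart, cubicPart, smul_eq_mul]
  split_ifs <;> first | omega | ring

theorem stdSymp_quadraticPart_cubicPart {n : ℕ} (hn : 0 < n) (c : ℝ) (k : ℕ) :
    stdSymp n (quadraticPart n c k) (cubicPart n) = c := by
  rw [stdSymp, Finset.sum_eq_single ⟨0, hn⟩ (fun i _ hi => ?_) (by simp)]
  · simp [quadraticPart, cubicPart]
  · have hi : (i : ℕ) ≠ 0 := fun h => hi (Fin.ext h)
    simp [quadraticPart, cubicPart, hi]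

theorem quadraticPart_three_apply_lagCoord_p (n : ℕ) (c : ℝ) (i : Fin n) :
    quadraticPart n c 3 (lagCoord (fun _ => false) i) = 0 := by
  simp only [quadraticPart, lagCoord, Bool.false_eq_true, if_false, add_zero]
  split_ifs <;> first | rfl | omega

theorem quadraticPart_two_apply_lagCoord_q₂ (n : ℕ) (c : ℝ) (i : Fin n) :
    quadraticPart n c 2 (lagCoord (fun i => (i : ℕ) = 1) i) = 0 := by
  simp only [quadraticPart, lagCoord, decide_eq_true_eq]
  split_ifs <;> first | rfl | omega

theorem stdSymp_quadraticPart_three_two {n : ℕ} (hn : 2 ≤ n) (c₁ c₂ : ℝ) :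
    stdSymp n (quadraticPart n c₁ 3) (quadraticPart n c₂ 2) = -1 := by
  rw [stdSymp, Finset.sum_eq_single ⟨1, hn⟩ (fun i _ hi => ?_) (by simp)]
  · simp [quadraticPart]
  · have hi : (i : ℕ) ≠ 1 := fun h => hi (Fin.ext h)
    simp only [quadraticPart]
    split_ifs <;> first | omega | ring

/-- Lagrangian tangency orders for the class `(T₇)⁰`. -/
theorem T7_0_lagrangian_tangency_orders
    (n : ℕ) (hn : 2 ≤ n) (c₁ c₂ : ℝ) (hc : c₁ * c₂ ≠ 0)
    (B₁ B₂ : ℝ → Fin (2 * n) → ℝ)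
    (hB₁ : B₁ = fun (t : ℝ) (j : Fin (2 * n)) => if (j : ℕ) = 0 then t ^ 3 else if (j : ℕ) = 1 then -c₁ * t ^ 2 else if (j : ℕ) = 3 then -t ^ 2 else (0 : ℝ))
    (hB₂ : B₂ = fun (t : ℝ) (j : Fin (2 * n)) => if (j : ℕ) = 0 then t ^ 3 else if (j : ℕ) = 1 then -c₂ * t ^ 2 else if (j : ℕ) = 2 then -t ^ 2 else (0 : ℝ)) :
    Lt2 B₁ B₂ = 2 ∧ Lt1 B₁ = 3 ∧ Lt1 B₂ = 3 := by
  rw [hB₁, hB₂, eq_cusp_quadraticPart_cubicPart three_ne_zero,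
    eq_cusp_quadraticPart_cubicPart two_ne_zero]
  have hω₁ := stdSymp_quadraticPart_cubicPart (by omega : 0 < n) c₁ 3
  have hω₂ := stdSymp_quadraticPart_cubicPart (by omega : 0 < n) c₂ 2
  have hω₁₂ := stdSymp_quadraticPart_three_two hn c₁ c₂
  refine ⟨le_antisymm ?_ ?_, le_antisymm ?_ ?_, le_antisymm ?_ ?_⟩
  · exact iSup_le fun L => L.min_tOrd_cusp_le_two (by norm_num [hω₁₂])
  · exact le_iSup_of_le (.coordPlane fun _ => false)
      (le_min two_le_tOrd_cusp_coordPlane two_le_tOrd_cusp_coordPlane)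
  · exact iSup_le fun L => L.tOrd_cusp_le_three (by rw [hω₁]; exact left_ne_zero_of_mul hc)
  · exact le_iSup_of_le (.coordPlane fun _ => false)
      (three_le_tOrd_cusp_coordPlane (quadraticPart_three_apply_lagCoord_p n c₁))
  · exact iSup_le fun L => L.tOrd_cusp_le_three (by rw [hω₂]; exact right_ne_zero_of_mul hc)
  · exact le_iSup_of_le (.coordPlane fun i => (i : ℕ) = 1)
      (three_le_tOrd_cusp_coordPlane (quadraticPart_two_apply_lagCoord_q₂ n c₂))

end
end

section
/- Let n ≥ 3. Consider the two curve-germs in ℝ^{2n} (coordinates (p₁,q₁,p₂,q₂,p₃,q₃,…,pₙ,qₙ), all unlisted coordinates equal to 0): B₁(t) = (t³, 0, 0, 0, −t², 0, …, 0) and B₂(t) = (t³, 0, −t², 0, 0, 0, …, 0) (the class (T₇)⁷). Then Lt(B₁,B₂) = ∞; indeed both branches are contained in the smooth Lagrangian submanifold {q₁ = … = qₙ = 0}. -/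
noncomputable section

private lemma vanishOrder_zero_fun : vanishOrder (fun _ : ℝ => (0:ℝ)) = ⊤ := by
  have hiter : ∀ m : ℕ, iteratedDeriv m (fun _ : ℝ => (0:ℝ)) 0 = 0 := by
    intro m
    induction m with
    | zero => simp
    | succ k ih =>
        rw [iteratedDeriv_succ',
          show deriv (fun _ : ℝ => (0:ℝ)) = fun _ => 0 from funext fun x => deriv_const x 0]
        exact ih
  have : {k : ℕ∞ | ∃ m : ℕ, k = m ∧ 1 ≤ m ∧ iteratedDeriv m (fun _ : ℝ => (0:ℝ)) 0 ≠ 0} = ∅ := by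
    ext k
    simp only [Set.mem_setOf_eq, Set.mem_empty_iff_false, iff_false]
    rintro ⟨m, _, _, hne⟩
    exact hne (hiter m)
  rw [vanishOrder, this, sInf_empty]

/-- Lagrangian tangency orders for the class `(T₇)⁷`: both branches lie in the smooth
Lagrangian submanifold `{q₁ = ⋯ = qₙ = 0}`. -/
theorem T7_7_lagrangian_tangency_orders
    (n : ℕ) (hn : 3 ≤ n)
    (B₁ B₂ : ℝ → Fin (2 * n) → ℝ)
    (hB₁ : B₁ = fun (t : ℝ) (j : Fin (2 * n)) => if (j : ℕ) = 0 then t ^ 3 else if (j : ℕ) = 4 then -t ^ 2 else (0 : ℝ))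
    (hB₂ : B₂ = fun (t : ℝ) (j : Fin (2 * n)) => if (j : ℕ) = 0 then t ^ 3 else if (j : ℕ) = 2 then -t ^ 2 else (0 : ℝ)) :
    Lt2 B₁ B₂ = ⊤ ∧
    ∃ L : LagrangianGerm n,
      (∀ (i : Fin n) (x : Fin (2 * n) → ℝ),
        L.H i x = x ⟨2 * i.val + 1, by have := i.isLt; omega⟩) ∧
      tOrd B₁ L = ⊤ ∧ tOrd B₂ L = ⊤ := by
  classical
  set qi : Fin n → Fin (2 * n) := fun i => ⟨2 * i.val + 1, by have := i.isLt; omega⟩ with hqi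
  have hqinj : Function.Injective qi := by
    intro a b hab
    have : 2 * a.val + 1 = 2 * b.val + 1 := congrArg Fin.val hab
    exact Fin.ext (by omega)
  have hfd : ∀ (i : Fin n) (x : Fin (2 * n) → ℝ),
      fderiv ℝ (fun y : Fin (2 * n) → ℝ => y (qi i)) x
        = (ContinuousLinearMap.proj (qi i) : (Fin (2 * n) → ℝ) →L[ℝ] ℝ) := fun i _ =>
    (ContinuousLinearMap.proj (qi i) : (Fin (2 * n) → ℝ) →L[ℝ] ℝ).fderiv
  let L : LagrangianGerm n :=
    { H := fun i x => x (qi i)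
      smooth := fun i =>
        (ContinuousLinearMap.proj (qi i) : (Fin (2 * n) → ℝ) →L[ℝ] ℝ).contDiff
      zero_at_zero := fun i => rfl
      lagrangian := by
        refine ⟨Set.univ, isOpen_univ, Set.mem_univ _, fun x _ _ => ⟨?_, ?_⟩⟩
        · have : (fun i => fderiv ℝ (fun y : Fin (2 * n) → ℝ => y (qi i)) x)
              = fun i => (ContinuousLinearMap.proj (qi i) : (Fin (2 * n) → ℝ) →L[ℝ] ℝ) :=
            funext fun i => hfd i x
          rw [this, Fintype.linearIndependent_iff]
          intro g hg i
          have h2 := congrArg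
            (fun φ : (Fin (2 * n) → ℝ) →L[ℝ] ℝ => φ (Pi.single (qi i) (1:ℝ))) hg
          simpa [ContinuousLinearMap.sum_apply, Pi.single_apply, hqinj.eq_iff,
            mul_ite] using h2
        · intro u v hu hv
          have hu' : ∀ i, u (qi i) = 0 := fun i => by
            have := hu i; rwa [hfd, ContinuousLinearMap.proj_apply] at this
          have hv' : ∀ i, v (qi i) = 0 := fun i => by
            have := hv i; rwa [hfd, ContinuousLinearMap.proj_apply] at this
          unfold stdSymp
          refine Finset.sum_eq_zero fun i _ => ?_
          have h1 : u ⟨2 * i.val + 1, by have := i.isLt; omega⟩ = 0 := hu' i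
          have h2 : v ⟨2 * i.val + 1, by have := i.isLt; omega⟩ = 0 := hv' i
          rw [h1, h2]; ring }
  have hLH : ∀ (i : Fin n) (x : Fin (2 * n) → ℝ), L.H i x = x (qi i) := fun _ _ => rfl
  have hcomp1 : ∀ i : Fin n, (fun t : ℝ => L.H i (B₁ t)) = fun _ => (0:ℝ) := by
    intro i
    funext t
    rw [hLH, hB₁]
    have h0 : ((qi i : Fin (2 * n)) : ℕ) = 2 * i.val + 1 := rfl
    simp only [h0]
    rw [if_neg (by omega), if_neg (by omega)]
  have hcomp2 : ∀ i : Fin n, (fun t : ℝ => L.H i (B₂ t)) = fun _ => (0:ℝ) := by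
    intro i
    funext t
    rw [hLH, hB₂]
    have h0 : ((qi i : Fin (2 * n)) : ℕ) = 2 * i.val + 1 := rfl
    simp only [h0]
    rw [if_neg (by omega), if_neg (by omega)]
  have ht1 : tOrd B₁ L = ⊤ := by
    unfold tOrd
    have : ∀ i : Fin n, vanishOrder (fun t => L.H i (B₁ t)) = ⊤ := fun i => by
      rw [hcomp1 i]; exact vanishOrder_zero_fun
    simp [this]
  have ht2 : tOrd B₂ L = ⊤ := by
    unfold tOrd
    have : ∀ i : Fin n, vanishOrder (fun t => L.H i (B₂ t)) = ⊤ := fun i => by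
      rw [hcomp2 i]; exact vanishOrder_zero_fun
    simp [this]
  refine ⟨?_, L, hLH, ht1, ht2⟩
  refine le_antisymm le_top ?_
  have := le_iSup (fun L' : LagrangianGerm n => min (tOrd B₁ L') (tOrd B₂ L')) L
  rw [ht1, ht2] at this
  simpa [Lt2] using this


end
end

section
/- Let H₁,…,H_{n−1} : ℝⁿ → ℝ be smooth functions and N = {x ∈ ℝⁿ : H₁(x) = … = H_{n−1}(x) = 0}. Let X_H be the Hamiltonian vector field on N, i.e., the unique smooth vector field on ℝⁿ satisfying X_H ⌟ (dx₁∧…∧dxₙ) = dH₁∧…∧dH_{n−1}; its i-th component is (−1)^{i+1} times the determinant of the Jacobian matrix of (H₁,…,H_{n−1}) with respect to the variables (x₁,…,x_{i−1},x_{i+1},…,xₙ). Then for every closed smooth 2-form α on ℝⁿ, the Lie derivative L_{X_H}α has zero algebraic restriction to N; that is, there exist a smooth 2-form α̃ and a smooth 1-form β̃ on ℝⁿ, both vanishing at every point of N, such that L_{X_H}α = α̃ + dβ̃. -/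
/-!
Pointwise, `X_H ⌟ α` is a combination `∑ μⱼ dHⱼ` whose coefficients `μⱼ` are polynomials in the
entries of `α` and of the Jacobian of `H`, hence smooth. Indeed, let `A` have rows
`eₚ, e_q, dH₁, …, dH_{n-1}`; the square matrix `[A v | A]` is singular, and expanding its
determinant along the first column shows that `Xₚ v_q - X_q vₚ` is a combination of the `dHⱼ(v)`.
Contracting with the skew matrix of `α` turns the left side into `2 α(X, v)`.

With `g = ∑ μⱼ Hⱼ`, the `1`-form `B = X_H ⌟ α - dg` vanishes on `N`, where `dg = ∑ μⱼ dHⱼ`, and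
`d(X_H ⌟ α) = dB` since `d(dg) = 0`; so `L_{X_H} α = 0 + dB`.
-/

noncomputable section

/-- The index in `Fin n` obtained from `l : Fin (n-1)` by skipping the index `i`:
the complementary indices to `i`, in increasing order. -/
def skipIdx {n : ℕ} (i : Fin n) (l : Fin (n - 1)) : Fin n :=
  if h : l.val < i.val then ⟨l.val, by have := i.isLt; omega⟩
  else ⟨l.val + 1, by have := l.isLt; omega⟩

lemma skipIdx_eq_succAbove {m : ℕ} (p : Fin (m + 1)) (l : Fin m) :
    skipIdx p l = p.succAbove l := by
  unfold skipIdx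
  split_ifs with h <;> ext <;> simp [Fin.succAbove, Fin.lt_def, h]

open Finset Matrix
open scoped ContDiff

section CrossProduct

variable {R : Type*} [CommRing R] {m : ℕ}

def crossVec (W : Fin m → Fin (m + 1) → R) (p : Fin (m + 1)) : R :=
  (-1) ^ (p : ℕ) * (Matrix.of fun k l => W k (p.succAbove l)).det

/-- The determinant with rows `eₚ`, `e_q` and the rows of `W` other than the `j`-th. -/
def crossMinor (W : Fin m → Fin (m + 1) → R) (j : Fin m) (p q : Fin (m + 1)) : R :=
  (Matrix.of fun i => vecCons (Pi.single p 1) (vecCons (Pi.single q 1) W)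
    (j.succ.succ.succAbove i)).det

lemma sum_neg_one_pow_mul_dotProduct_mul_det_succAbove (A : Fin (m + 1) → Fin m → R)
    (v : Fin m → R) :
    ∑ k : Fin (m + 1), (-1) ^ (k : ℕ) * (A k ⬝ᵥ v) * (Matrix.of fun i => A (k.succAbove i)).det =
      0 := by
  set C : Matrix (Fin (m + 1)) (Fin (m + 1)) R := Matrix.of fun i => Fin.cons (A i ⬝ᵥ v) (A i)
  have hcol : (fun k => ∑ i, (Fin.cons 0 v : Fin (m + 1) → R) i • C k i) = fun k => C k 0 := by
    ext k
    simp [C, Fin.sum_univ_succ, dotProduct, mul_comm]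
  have hC : C.det = 0 := by
    have h := det_updateCol_sum C 0 (Fin.cons 0 v)
    rwa [hcol, updateCol_eq_self, Fin.cons_zero, zero_smul] at h
  rw [det_succ_column_zero] at hC
  exact hC

lemma det_vecCons_single (W : Fin m → Fin (m + 1) → R) (p : Fin (m + 1)) :
    (Matrix.of (vecCons (Pi.single p 1) W)).det = crossVec W p := by
  rw [det_succ_row_zero, Fintype.sum_eq_single p fun l hl => by simp [hl]]
  simp [crossVec, submatrix]

lemma crossVec_mul_sub_crossVec_mul (W : Fin m → Fin (m + 1) → R) (v : Fin (m + 1) → R)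
    (p q : Fin (m + 1)) :
    crossVec W p * v q - crossVec W q * v p =
      ∑ j : Fin m, (-1) ^ (j : ℕ) * (W j ⬝ᵥ v) * crossMinor W j p q := by
  have h := sum_neg_one_pow_mul_dotProduct_mul_det_succAbove
    (vecCons (Pi.single p 1) (vecCons (Pi.single q 1) W)) v
  have hrows : (fun i => vecCons (Pi.single p 1) (vecCons (Pi.single q 1) W)
      ((1 : Fin (m + 2)).succAbove i)) = vecCons (Pi.single p 1) W := by
    ext i : 1
    refine Fin.cases ?_ (fun i => ?_) i <;> simp
  rw [Fin.sum_univ_succ, Fin.sum_univ_succ] at h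
  simp only [Fin.succ_zero_eq_one, Fin.coe_ofNat_eq_mod, Nat.zero_mod, pow_zero, cons_val_zero,
    single_dotProduct, one_mul, Fin.zero_succAbove, cons_val_succ, det_vecCons_single,
    Nat.one_mod, pow_succ, mul_neg, mul_one, cons_val_one, neg_mul, hrows, Fin.val_succ,
    neg_neg] at h
  unfold crossMinor
  linear_combination -h

lemma two_mul_sum_skew_mul_crossVec (S : Fin (m + 1) → Fin (m + 1) → R)
    (hS : ∀ p q, S p q = -S q p) (W : Fin m → Fin (m + 1) → R) (v : Fin (m + 1) → R) :
    2 * ∑ p, ∑ q, S p q * crossVec W p * v q =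
      ∑ j : Fin m, ((-1) ^ (j : ℕ) * ∑ p, ∑ q, S p q * crossMinor W j p q) * (W j ⬝ᵥ v) := by
  have hswap : ∑ p, ∑ q, S p q * crossVec W p * v q =
      -∑ p, ∑ q, S p q * crossVec W q * v p := by
    rw [sum_comm, ← sum_neg_distrib]
    refine sum_congr rfl fun p _ => ?_
    rw [← sum_neg_distrib]
    refine sum_congr rfl fun q _ => ?_
    rw [hS]
    ring
  calc 2 * ∑ p, ∑ q, S p q * crossVec W p * v q
      = ∑ p, ∑ q, S p q * (crossVec W p * v q - crossVec W q * v p) := by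
        rw [two_mul]
        nth_rw 2 [hswap]
        simp only [mul_sub, sum_sub_distrib, mul_assoc]
        ring
    _ = ∑ j : Fin m, ((-1) ^ (j : ℕ) * ∑ p, ∑ q, S p q * crossMinor W j p q) * (W j ⬝ᵥ v) := by
        simp only [crossVec_mul_sub_crossVec_mul, mul_sum, sum_mul]
        rw [sum_comm (γ := Fin m)]
        refine sum_congr rfl fun p _ => ?_
        rw [sum_comm (γ := Fin m)]
        exact sum_congr rfl fun q _ => sum_congr rfl fun j _ => by ring

end CrossProduct

section NormedField

variable {𝕜 : Type*} [NontriviallyNormedField 𝕜] {E : Type*} [NormedAddCommGroup E]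
  [NormedSpace 𝕜 E]

lemma ContinuousLinearMap.apply_eq_dotProduct_single {ι : Type*} [Fintype ι] [DecidableEq ι]
    (f : (ι → 𝕜) →L[𝕜] 𝕜) (v : ι → 𝕜) :
    f v = (fun l => f (Pi.single l 1)) ⬝ᵥ v := by
  conv_lhs => rw [pi_eq_sum_univ' v]
  simp [dotProduct, mul_comm]

lemma ContinuousLinearMap.apply_apply_eq_sum_single {ι : Type*} [Fintype ι] [DecidableEq ι]
    (S : (ι → 𝕜) →L[𝕜] (ι → 𝕜) →L[𝕜] 𝕜) (u w : ι → 𝕜) :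
    S u w = ∑ p, ∑ q, S (Pi.single p 1) (Pi.single q 1) * u p * w q := by
  conv_lhs => rw [pi_eq_sum_univ' u, pi_eq_sum_univ' w]
  simp only [map_sum, map_smul, _root_.sum_apply, _root_.smul_apply, smul_eq_mul, mul_sum,
    mul_left_comm, mul_comm]
  exact sum_comm

theorem ContDiff.matrix_det {ι : Type*} [Fintype ι] [DecidableEq ι] {n : WithTop ℕ∞}
    {M : E → Matrix ι ι 𝕜} (hM : ∀ i j, ContDiff 𝕜 n fun x => M x i j) :
    ContDiff 𝕜 n fun x => (M x).det := by
  simp only [det_apply']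
  exact ContDiff.sum fun σ _ => contDiff_const.mul (contDiff_prod fun i _ => hM (σ i) i)

lemma contDiff_crossMinor {m : ℕ} {n : WithTop ℕ∞} {W : E → Fin m → Fin (m + 1) → 𝕜}
    (hW : ∀ k l, ContDiff 𝕜 n fun x => W x k l) (j : Fin m) (p q : Fin (m + 1)) :
    ContDiff 𝕜 n fun x => crossMinor (W x) j p q := by
  refine ContDiff.matrix_det fun i l => ?_
  simp only [Matrix.of_apply]
  generalize j.succ.succ.succAbove i = r
  refine Fin.cases ?_ (Fin.cases ?_ fun k => ?_) r <;> simp [hW, contDiff_const]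

end NormedField

section RCLike

variable {𝕜 : Type*} [RCLike 𝕜] {E : Type*} [NormedAddCommGroup E] [NormedSpace 𝕜 E]

def crossCoeff {m : ℕ} (S : (Fin (m + 1) → 𝕜) →L[𝕜] (Fin (m + 1) → 𝕜) →L[𝕜] 𝕜)
    (W : Fin m → Fin (m + 1) → 𝕜) (j : Fin m) : 𝕜 :=
  (-1) ^ (j : ℕ) / 2 * ∑ p, ∑ q, S (Pi.single p 1) (Pi.single q 1) * crossMinor W j p q

lemma apply_crossVec_eq_sum_crossCoeff_mul {m : ℕ}
    (S : (Fin (m + 1) → 𝕜) →L[𝕜] (Fin (m + 1) → 𝕜) →L[𝕜] 𝕜) (hS : ∀ u, S u u = 0)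
    (W : Fin m → Fin (m + 1) → 𝕜) (v : Fin (m + 1) → 𝕜) :
    S (crossVec W) v = ∑ j, crossCoeff S W j * (W j ⬝ᵥ v) := by
  have hskew (a b : Fin (m + 1) → 𝕜) : S a b = -S b a := by
    have h := hS (a + b)
    simp only [map_add, _root_.add_apply, hS, zero_add, add_zero] at h
    linear_combination h
  have h := two_mul_sum_skew_mul_crossVec _ (fun p q => hskew (Pi.single p 1) (Pi.single q 1)) W v
  have hcoeff : ∑ j, crossCoeff S W j * (W j ⬝ᵥ v) = 2⁻¹ * ∑ j : Fin m,
      ((-1) ^ (j : ℕ) * ∑ p, ∑ q, S (Pi.single p 1) (Pi.single q 1) * crossMinor W j p q) *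
        (W j ⬝ᵥ v) := by
    rw [mul_sum]
    exact sum_congr rfl fun j _ => by rw [crossCoeff]; ring
  rw [hcoeff, ← h, ContinuousLinearMap.apply_apply_eq_sum_single]
  ring

lemma contDiff_crossCoeff {m : ℕ} {n : WithTop ℕ∞}
    {S : E → (Fin (m + 1) → 𝕜) →L[𝕜] (Fin (m + 1) → 𝕜) →L[𝕜] 𝕜} (hS : ContDiff 𝕜 n S)
    {W : E → Fin m → Fin (m + 1) → 𝕜} (hW : ∀ k l, ContDiff 𝕜 n fun x => W x k l) (j : Fin m) :
    ContDiff 𝕜 n fun x => crossCoeff (S x) (W x) j :=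
  contDiff_const.mul <| ContDiff.sum fun p _ => ContDiff.sum fun q _ =>
    ((hS.clm_apply contDiff_const).clm_apply contDiff_const).mul (contDiff_crossMinor hW j p q)

theorem exists_vanishing_same_antisymm_fderiv_of_eq_sum_smul_fderiv {ι : Type*} [Fintype ι]
    {H μ : ι → E → 𝕜} (hH : ∀ j, ContDiff 𝕜 ∞ (H j)) (hμ : ∀ j, ContDiff 𝕜 ∞ (μ j))
    {γ : E → E →L[𝕜] 𝕜} (hγ : ∀ x, γ x = ∑ j, μ j x • fderiv 𝕜 (H j) x) :
    ∃ B : E → E →L[𝕜] 𝕜, ContDiff 𝕜 ∞ B ∧ (∀ x, (∀ j, H j x = 0) → B x = 0) ∧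
      ∀ x u v, fderiv 𝕜 γ x u v - fderiv 𝕜 γ x v u = fderiv 𝕜 B x u v - fderiv 𝕜 B x v u := by
  set g : E → 𝕜 := fun x => ∑ j, μ j x * H j x
  have hg : ContDiff 𝕜 ∞ g := ContDiff.sum fun j _ => (hμ j).mul (hH j)
  have hdg : ContDiff 𝕜 ∞ (fderiv 𝕜 g) := hg.fderiv_right (by simp)
  have hdg_eq (x : E) : fderiv 𝕜 g x =
      ∑ j, (μ j x • fderiv 𝕜 (H j) x + H j x • fderiv 𝕜 (μ j) x) :=
    (HasFDerivAt.fun_sum fun j _ => ((hμ j).differentiable (by simp) x).hasFDerivAt.mul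
      ((hH j).differentiable (by simp) x).hasFDerivAt).fderiv
  have hγs : ContDiff 𝕜 ∞ γ := by
    rw [funext hγ]
    exact ContDiff.sum fun j _ => (hμ j).smul ((hH j).fderiv_right (by simp))
  refine ⟨fun x => γ x - fderiv 𝕜 g x, hγs.sub hdg, fun x hx => ?_, fun x u v => ?_⟩
  · rw [sub_eq_zero, hγ, hdg_eq]
    ext v
    simp [hx]
  · have hsymm := ((hg.contDiffAt (x := x)).isSymmSndFDerivAt (by
      simp only [minSmoothness_of_isRCLikeNormedField]; exact ENat.LEInfty.out)).eq u v
    rw [fderiv_fun_sub (hγs.differentiable (by simp) x) (hdg.differentiable (by simp) x)]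
    simp only [_root_.sub_apply]
    linear_combination hsymm

end RCLike

theorem lie_derivative_along_hamiltonian_field_zero_algebraic_restriction_general
    (n : ℕ)
    (H : Fin (n - 1) → (Fin n → ℝ) → ℝ) (hH : ∀ k, ContDiff ℝ (⊤ : ℕ∞) (H k))
    (N : Set (Fin n → ℝ)) (hN : N = {x | ∀ k, H k x = 0})
    (X : (Fin n → ℝ) → (Fin n → ℝ))
    (hX : ∀ x i, X x i = (-1 : ℝ) ^ ((i : ℕ) + 1 + 1) *
        (Matrix.of fun k l : Fin (n - 1) =>
          fderiv ℝ (H k) x (Pi.single (skipIdx i l) 1)).det)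
    (α : (Fin n → ℝ) → (Fin n → ℝ) →L[ℝ] (Fin n → ℝ) →L[ℝ] ℝ)
    (hα : ContDiff ℝ (⊤ : ℕ∞) α)
    (hαalt : ∀ x u, α x u u = 0) :
    ∃ (A : (Fin n → ℝ) → (Fin n → ℝ) →L[ℝ] (Fin n → ℝ) →L[ℝ] ℝ)
      (B : (Fin n → ℝ) → (Fin n → ℝ) →L[ℝ] ℝ),
      ContDiff ℝ (⊤ : ℕ∞) A ∧ ContDiff ℝ (⊤ : ℕ∞) B ∧
      (∀ x u, A x u u = 0) ∧
      (∀ x ∈ N, A x = 0) ∧ (∀ x ∈ N, B x = 0) ∧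
      ∀ x u v,
        fderiv ℝ (fun y => α y (X y)) x u v - fderiv ℝ (fun y => α y (X y)) x v u =
          A x u v + (fderiv ℝ B x u v - fderiv ℝ B x v u) := by
  rcases n with _ | m
  · refine ⟨0, 0, contDiff_const, contDiff_const, by simp, by simp, by simp, fun x u v => ?_⟩
    rw [Subsingleton.elim u 0, Subsingleton.elim v 0]
    simp only [map_zero, sub_self, add_zero]
  set W : (Fin (m + 1) → ℝ) → Fin m → Fin (m + 1) → ℝ :=
    fun x k l => fderiv ℝ (H k) x (Pi.single l 1)
  have hW (k : Fin m) (l : Fin (m + 1)) : ContDiff ℝ (⊤ : ℕ∞) fun x => W x k l :=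
    ((hH k).fderiv_right (by simp)).clm_apply contDiff_const
  have hXW (x : Fin (m + 1) → ℝ) : X x = crossVec (W x) := by
    ext p
    simp [hX, crossVec, W, skipIdx_eq_succAbove, pow_succ]
  obtain ⟨B, hB, hBN, hdB⟩ := exists_vanishing_same_antisymm_fderiv_of_eq_sum_smul_fderiv hH
    (contDiff_crossCoeff hα hW) (γ := fun y => α y (X y)) fun x => by
      ext v
      simp [hXW, apply_crossVec_eq_sum_crossCoeff_mul _ (hαalt x),
        ContinuousLinearMap.apply_eq_dotProduct_single (fderiv ℝ (H _) x) v, W]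
  refine ⟨0, B, contDiff_const, hB, by simp, by simp, fun x hx => hBN x (by rwa [hN] at hx), ?_⟩
  simpa using hdB

/-- Let `H₁, …, H_{n-1} : ℝⁿ → ℝ` be smooth and `N = {H₁ = ⋯ = H_{n-1} = 0}`. Let `X_H` be
the Hamiltonian vector field on `N`, i.e. the vector field `X_H ⌟ (dx₁∧…∧dxₙ) = dH₁∧…∧dH_{n-1}`,
whose `i`-th component is `(-1)^{i+1}` (with `1`-indexed `i`) times the determinant of the
Jacobian matrix of `(H₁,…,H_{n-1})` with respect to the variables obtained by omitting `xᵢ`.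
Then for every closed smooth `2`-form `α` on `ℝⁿ` the Lie derivative `L_{X_H} α = d(X_H ⌟ α)`
has zero algebraic restriction to `N`: there are a smooth `2`-form `A` and a smooth `1`-form
`B`, both vanishing at every point of `N`, with `L_{X_H} α = A + dB`. -/
theorem lie_derivative_along_hamiltonian_field_zero_algebraic_restriction
    (n : ℕ) (hn : 2 ≤ n)
    (H : Fin (n - 1) → (Fin n → ℝ) → ℝ) (hH : ∀ k, ContDiff ℝ (⊤ : ℕ∞) (H k))
    (N : Set (Fin n → ℝ)) (hN : N = {x | ∀ k, H k x = 0})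
    (X : (Fin n → ℝ) → (Fin n → ℝ))
    (hX : ∀ x i, X x i = (-1 : ℝ) ^ ((i : ℕ) + 1 + 1) *
        (Matrix.of fun k l : Fin (n - 1) =>
          fderiv ℝ (H k) x (Pi.single (skipIdx i l) 1)).det)
    (α : (Fin n → ℝ) → (Fin n → ℝ) →L[ℝ] (Fin n → ℝ) →L[ℝ] ℝ)
    (hα : ContDiff ℝ (⊤ : ℕ∞) α)
    (hαalt : ∀ x u, α x u u = 0)
    (hαclosed : ∀ x u v w,
      fderiv ℝ α x u v w - fderiv ℝ α x v u w + fderiv ℝ α x w u v = 0) :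
    ∃ (A : (Fin n → ℝ) → (Fin n → ℝ) →L[ℝ] (Fin n → ℝ) →L[ℝ] ℝ)
      (B : (Fin n → ℝ) → (Fin n → ℝ) →L[ℝ] ℝ),
      ContDiff ℝ (⊤ : ℕ∞) A ∧ ContDiff ℝ (⊤ : ℕ∞) B ∧
      (∀ x u, A x u u = 0) ∧
      (∀ x ∈ N, A x = 0) ∧ (∀ x ∈ N, B x = 0) ∧
      ∀ x u v,
        fderiv ℝ (fun y => α y (X y)) x u v - fderiv ℝ (fun y => α y (X y)) x v u =
          A x u v + (fderiv ℝ B x u v - fderiv ℝ B x v u) :=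
  lie_derivative_along_hamiltonian_field_zero_algebraic_restriction_general n H hH N hN X hX α hα
    hαalt

end
end
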